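/- arXiv:2203.04237 — 5 statements merged into one kernel-verified Lean document; each statement's English description precedes it below -/
import Mathlib

section
/- Let $g(u)$ be an invertible skew-symmetric $n\times n$ matrix with entries $g_{ij}(u) = T_{ijk}u^k + g^0_{ij}$ ($T$ totally antisymmetric, $g^0$ antisymmetric), and let $V^i(u) = g^{ij}(u) W_j(u)$ where $W_j(u) = A_{jl}u^l + B_j$ with $A$ constant skew-symmetric and $B$ constant. Then the Jacobian $V^i_{,p} = \partial V^i/\partial u^p$ satisfies $g_{qj}V^j_{,p} + g_{pj}V^j_{,q} = 0$ at every point $u$ where $g(u)$ is invertible. -/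
/-!
Since `g V = W` near `u`, differentiating in the direction `e_p` gives
`g_{qj} V^j_{,p} + T_{qjp} V^j = A_{qp}`. Thus `g_{qj} V^j_{,p} = A_{qp} - T_{qjp} V^j`, and the
right-hand side is antisymmetric in `(p, q)` because `A` and `T` are.
-/

open Matrix Filter Topology

theorem eventually_isUnit_det {E ι 𝕜 : Type*} [TopologicalSpace E] [Fintype ι] [DecidableEq ι]
    [NormedField 𝕜] {G : E → Matrix ι ι 𝕜} {u : E}
    (hG : ∀ i j, ContinuousAt (fun v => G v i j) u) (hu : IsUnit (G u).det) :
    ∀ᶠ v in 𝓝 u, IsUnit (G v).det := by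
  have hdet : ContinuousAt (fun v => (G v).det) u := by
    simp only [det_apply]
    fun_prop
  simpa only [isUnit_iff_ne_zero] using hdet.eventually_ne hu.ne_zero

section Differentiability

variable {𝕜 E ι : Type*} [NontriviallyNormedField 𝕜] [NormedAddCommGroup E] [NormedSpace 𝕜 E]
  [Fintype ι] {G : E → Matrix ι ι 𝕜} {u : E}

variable [DecidableEq ι] in
theorem differentiableAt_det (hG : ∀ i j, DifferentiableAt 𝕜 (fun v => G v i j) u) :
    DifferentiableAt 𝕜 (fun v => (G v).det) u := by
  simp only [det_apply]
  fun_prop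

variable [DecidableEq ι] in
theorem differentiableAt_adjugate_apply (hG : ∀ i j, DifferentiableAt 𝕜 (fun v => G v i j) u)
    (i j : ι) : DifferentiableAt 𝕜 (fun v => (G v).adjugate i j) u := by
  simp only [adjugate_apply]
  refine differentiableAt_det fun k l => ?_
  by_cases hk : k = j
  · subst hk
    simp only [updateRow_self]
    fun_prop
  · simpa only [updateRow_ne hk] using hG k l

variable [DecidableEq ι] in
theorem differentiableAt_inv_mulVec_apply {W : E → ι → 𝕜}
    (hG : ∀ i j, DifferentiableAt 𝕜 (fun v => G v i j) u)
    (hW : ∀ j, DifferentiableAt 𝕜 (fun v => W v j) u) (hu : IsUnit (G u).det) (i : ι) :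
    DifferentiableAt 𝕜 (fun v => ((G v)⁻¹ *ᵥ W v) i) u := by
  have hinv (j : ι) : DifferentiableAt 𝕜 (fun v => (G v)⁻¹ i j) u := by
    simp only [inv_def, Matrix.smul_apply, Ring.inverse_eq_inv', smul_eq_mul]
    exact ((differentiableAt_det hG).inv hu.ne_zero).mul (differentiableAt_adjugate_apply hG i j)
  simp only [mulVec, dotProduct]
  exact DifferentiableAt.fun_sum fun j _ => (hinv j).mul (hW j)

theorem sum_mul_fderiv_add_sum_fderiv_mul_eq_fderiv {V W : E → ι → 𝕜}
    (hG : ∀ i j, DifferentiableAt 𝕜 (fun v => G v i j) u)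
    (hV : ∀ j, DifferentiableAt 𝕜 (fun v => V v j) u)
    (hGVW : ∀ᶠ v in 𝓝 u, G v *ᵥ V v = W v) (q : ι) (h : E) :
    ∑ j, G u q j * fderiv 𝕜 (fun v => V v j) u h
      + ∑ j, fderiv 𝕜 (fun v => G v q j) u h * V u j = fderiv 𝕜 (fun v => W v q) u h := by
  have hq : (fun v => ∑ j, G v q j * V v j) =ᶠ[𝓝 u] fun v => W v q :=
    hGVW.mono fun v hv => congrFun hv q
  have hprod := HasFDerivAt.fun_sum (u := Finset.univ)
    fun j _ => (hG q j).hasFDerivAt.fun_mul (hV j).hasFDerivAt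
  rw [← hq.fderiv_eq, hprod.fderiv, ← Finset.sum_add_distrib]
  simp only [_root_.sum_apply, _root_.add_apply, _root_.smul_apply, smul_eq_mul]
  exact Finset.sum_congr rfl fun j _ => by ring

end Differentiability

theorem fderiv_sum_mul_add_const_single {ι 𝕜 : Type*} [NontriviallyNormedField 𝕜] [Fintype ι]
    [DecidableEq ι] (c : ι → 𝕜) (d : 𝕜) (u : ι → 𝕜) (p : ι) :
    fderiv 𝕜 (fun v => ∑ k, c k * v k + d) u (Pi.single p 1) = c p := by
  have hlin := HasFDerivAt.fun_sum (u := Finset.univ)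
    fun k _ => (hasFDerivAt_apply (𝕜 := 𝕜) k u).const_mul (c k)
  rw [fderiv_add_const, hlin.fderiv]
  simp [Pi.single_apply]

theorem stmt_6_general (n : ℕ) (T : Fin n → Fin n → Fin n → ℂ)
    (hT1 : ∀ i j k, T j i k = - T i j k) (hT2 : ∀ i j k, T i k j = - T i j k)
    (g0 : Fin n → Fin n → ℂ)
    (A : Fin n → Fin n → ℂ) (hA : ∀ i j, A j i = - A i j) (B : Fin n → ℂ)
    (g : (Fin n → ℂ) → Matrix (Fin n) (Fin n) ℂ)
    (hg : ∀ u i j, g u i j = (∑ k, T i j k * u k) + g0 i j)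
    (W : (Fin n → ℂ) → Fin n → ℂ)
    (hW : ∀ u j, W u j = (∑ l, A j l * u l) + B j)
    (V : (Fin n → ℂ) → Fin n → ℂ)
    (hV : ∀ u, V u = ((g u)⁻¹).mulVec (W u))
    (u : Fin n → ℂ) (hu : IsUnit (g u).det) :
    ∀ q p : Fin n,
      (∑ j, g u q j * fderiv ℂ (fun v => V v j) u (Pi.single p 1)) +
      (∑ j, g u p j * fderiv ℂ (fun v => V v j) u (Pi.single q 1)) = 0 := by
  have hg_diff (i j) : DifferentiableAt ℂ (fun v => g v i j) u := by
    simp only [hg]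
    fun_prop
  have hW_diff (j) : DifferentiableAt ℂ (fun v => W v j) u := by
    simp only [hW]
    fun_prop
  have hV_diff (j) : DifferentiableAt ℂ (fun v => V v j) u := by
    simpa only [hV] using differentiableAt_inv_mulVec_apply hg_diff hW_diff hu j
  have hgVW : ∀ᶠ v in 𝓝 u, g v *ᵥ V v = W v :=
    (eventually_isUnit_det (fun i j => (hg_diff i j).continuousAt) hu).mono fun v hv => by
      rw [hV, mulVec_mulVec, mul_nonsing_inv _ hv, one_mulVec]
  have key (q p) : ∑ j, g u q j * fderiv ℂ (fun v => V v j) u (Pi.single p 1)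
      = A q p - ∑ j, T q j p * V u j := by
    have hdg (j) : fderiv ℂ (fun v => g v q j) u (Pi.single p 1) = T q j p := by
      simp only [hg]
      exact fderiv_sum_mul_add_const_single _ _ u p
    have hdW : fderiv ℂ (fun v => W v q) u (Pi.single p 1) = A q p := by
      simp only [hW]
      exact fderiv_sum_mul_add_const_single _ _ u p
    have hprod :=
      sum_mul_fderiv_add_sum_fderiv_mul_eq_fderiv hg_diff hV_diff hgVW q (Pi.single p 1)
    simp only [hdg, hdW] at hprod
    linear_combination hprod
  have hT (p q j) : T p j q = - T q j p := by
    linear_combination hT2 p q j - hT1 q p j + hT2 q p j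
  intro q p
  simp only [key, hA q p, hT p q, neg_mul, Finset.sum_neg_distrib]
  ring

/-- For `V = g⁻¹ W` with `g` affine skew-symmetric and `W` affine with
skew-symmetric linear part, the first compatibility condition
`g_{qj} V^j_{,p} + g_{pj} V^j_{,q} = 0` holds wherever `g` is invertible. -/
theorem stmt_6 (n : ℕ) (T : Fin n → Fin n → Fin n → ℂ)
    (hT1 : ∀ i j k, T j i k = - T i j k) (hT2 : ∀ i j k, T i k j = - T i j k)
    (g0 : Fin n → Fin n → ℂ) (hg0 : ∀ i j, g0 j i = - g0 i j)
    (A : Fin n → Fin n → ℂ) (hA : ∀ i j, A j i = - A i j) (B : Fin n → ℂ)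
    (g : (Fin n → ℂ) → Matrix (Fin n) (Fin n) ℂ)
    (hg : ∀ u i j, g u i j = (∑ k, T i j k * u k) + g0 i j)
    (W : (Fin n → ℂ) → Fin n → ℂ)
    (hW : ∀ u j, W u j = (∑ l, A j l * u l) + B j)
    (V : (Fin n → ℂ) → Fin n → ℂ)
    (hV : ∀ u, V u = ((g u)⁻¹).mulVec (W u))
    (u : Fin n → ℂ) (hu : IsUnit (g u).det) :
    ∀ q p : Fin n,
      (∑ j, g u q j * fderiv ℂ (fun v => V v j) u (Pi.single p 1)) +
      (∑ j, g u p j * fderiv ℂ (fun v => V v j) u (Pi.single q 1)) = 0 :=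
  stmt_6_general n T hT1 hT2 g0 A hA B g hg W hW V hV u hu
end

section
/- With $g$, $W$, $V$ as above ($g_{ij} = T_{ijk}u^k + g^0_{ij}$ invertible skew-symmetric with $T$ totally antisymmetric, $W_j = A_{jl}u^l + B_j$ with $A$ skew-symmetric, $V^i = g^{ij}W_j$), the second compatibility condition $g_{qk}V^k_{,pl} + g_{pq,k}V^k_{,l} + g_{qk,l}V^k_{,p} = 0$ holds identically, where $g_{pq,k} = T_{pqk}$ and $V^k_{,pl}$ denotes second partial derivatives. -/
/-!
On the open set where `g` is invertible, `V` is smooth and `g V = W` holds identically, so its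
derivatives may be taken. Since `g` and `W` are affine, differentiating once in direction `p`
gives `g_{qk} V^k_{,p} + T_{qkp} V^k = A_{qp}`, and differentiating this in direction `l` gives
`g_{qk} V^k_{,pl} + T_{qkp} V^k_{,l} + T_{qkl} V^k_{,p} = 0`. The total antisymmetry of `T`
makes it cyclic, `T_{qkp} = T_{pqk}`, which is the claimed identity.
-/

open Filter Topology Matrix

theorem isOpen_setOf_isUnit_det {X 𝕜 ι : Type*} [TopologicalSpace X] [Field 𝕜]
    [TopologicalSpace 𝕜] [IsTopologicalRing 𝕜] [T1Space 𝕜] [Fintype ι] [DecidableEq ι]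
    {M : X → Matrix ι ι 𝕜} (hM : ∀ i j, Continuous fun v => M v i j) :
    IsOpen {v | IsUnit (M v).det} := by
  simp only [isUnit_iff_ne_zero]
  exact isOpen_ne.preimage (continuous_pi fun i => continuous_pi (hM i)).matrix_det

section

variable {𝕜 : Type*} [NontriviallyNormedField 𝕜] {E : Type*} [NormedAddCommGroup E]
  [NormedSpace 𝕜 E] {ι : Type*} [Fintype ι] {n : WithTop ℕ∞} {u : E}

theorem ContDiffAt.matrix_det [DecidableEq ι] {M : E → Matrix ι ι 𝕜}
    (hM : ∀ i j, ContDiffAt 𝕜 n (fun v => M v i j) u) :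
    ContDiffAt 𝕜 n (fun v => (M v).det) u := by
  simp only [Matrix.det_apply']
  exact ContDiffAt.sum fun σ _ =>
    contDiffAt_const.mul (contDiffAt_prod fun i _ => hM (σ i) i)

theorem ContDiffAt.matrix_adjugate_apply [DecidableEq ι] {M : E → Matrix ι ι 𝕜}
    (hM : ∀ i j, ContDiffAt 𝕜 n (fun v => M v i j) u) (i j : ι) :
    ContDiffAt 𝕜 n (fun v => (M v).adjugate i j) u := by
  simp only [Matrix.adjugate_apply]
  refine ContDiffAt.matrix_det fun i' j' => ?_
  simp only [Matrix.updateRow_apply]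
  split_ifs
  exacts [contDiffAt_const, hM i' j']

theorem ContDiffAt.matrix_inv_mulVec_apply [DecidableEq ι] {M : E → Matrix ι ι 𝕜} {w : E → ι → 𝕜}
    (hM : ∀ i j, ContDiffAt 𝕜 n (fun v => M v i j) u)
    (hw : ∀ j, ContDiffAt 𝕜 n (fun v => w v j) u) (hdet : IsUnit (M u).det) (i : ι) :
    ContDiffAt 𝕜 n (fun v => ((M v)⁻¹ *ᵥ w v) i) u := by
  simp only [inv_def, Ring.inverse_eq_inv', Matrix.smul_apply, smul_eq_mul, mulVec, dotProduct,
    mul_assoc, ← Finset.mul_sum]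
  exact (ContDiffAt.matrix_det hM |>.inv hdet.ne_zero).mul
    (ContDiffAt.sum fun j _ => (ContDiffAt.matrix_adjugate_apply hM i j).mul (hw j))

theorem fderiv_apply_of_sum_mul_eventuallyEq {a F : ι → E → 𝕜} {c : E → 𝕜}
    (ha : ∀ k, DifferentiableAt 𝕜 (a k) u) (hF : ∀ k, DifferentiableAt 𝕜 (F k) u)
    (h : (fun v => ∑ k, a k v * F k v) =ᶠ[𝓝 u] c) (y : E) :
    fderiv 𝕜 c u y = ∑ k, (a k u * fderiv 𝕜 (F k) u y + fderiv 𝕜 (a k) u y * F k u) := by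
  have hsum := HasFDerivAt.fun_sum (u := Finset.univ) fun k _ =>
    (ha k).hasFDerivAt.mul (hF k).hasFDerivAt
  rw [(hsum.congr_of_eventuallyEq h.symm).fderiv]
  simp [mul_comm]

end

section

variable {𝕜 : Type*} [NontriviallyNormedField 𝕜] {ι : Type*} [Fintype ι]
  {f : (ι → 𝕜) → 𝕜} {c : ι → 𝕜} {b : 𝕜}

theorem hasFDerivAt_of_eq_sum_mul_add_const (hf : ∀ w, f w = ∑ k, c k * w k + b)
    (v : ι → 𝕜) :
    HasFDerivAt f (∑ k, c k • ContinuousLinearMap.proj (R := 𝕜) (φ := fun _ : ι => 𝕜) k) v := by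
  rw [funext hf]
  exact (HasFDerivAt.fun_sum fun k _ => (hasFDerivAt_apply k v).const_mul (c k)).add_const b

theorem contDiff_of_eq_sum_mul_add_const (hf : ∀ w, f w = ∑ k, c k * w k + b)
    {n : WithTop ℕ∞} : ContDiff 𝕜 n f := by
  rw [funext hf]
  fun_prop

theorem fderiv_single_of_eq_sum_mul_add_const [DecidableEq ι] (hf : ∀ w, f w = ∑ k, c k * w k + b)
    (v : ι → 𝕜) (m : ι) : fderiv 𝕜 f v (Pi.single m 1) = c m := by
  rw [(hasFDerivAt_of_eq_sum_mul_add_const hf v).fderiv]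
  simp [Pi.single_apply]

theorem sum_mul_fderiv_single_of_affine_of_eventuallyEq [DecidableEq ι] {a F : ι → (ι → 𝕜) → 𝕜}
    {c : (ι → 𝕜) → 𝕜} {T : ι → ι → 𝕜} {b : ι → 𝕜} {v : ι → 𝕜}
    (ha : ∀ k w, a k w = ∑ m, T k m * w m + b k) (hF : ∀ k, DifferentiableAt 𝕜 (F k) v)
    (h : (fun w => ∑ k, a k w * F k w) =ᶠ[𝓝 v] c) (m : ι) :
    ∑ k, a k v * fderiv 𝕜 (F k) v (Pi.single m 1)
      = fderiv 𝕜 c v (Pi.single m 1) - ∑ k, T k m * F k v := by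
  have hLeibniz := fderiv_apply_of_sum_mul_eventuallyEq
    (fun k => (hasFDerivAt_of_eq_sum_mul_add_const (ha k) v).differentiableAt) hF h (Pi.single m 1)
  simp only [fderiv_single_of_eq_sum_mul_add_const (ha _), Finset.sum_add_distrib] at hLeibniz
  exact eq_sub_of_add_eq hLeibniz.symm

theorem sum_mul_fderiv_fderiv_single_add_of_affine [DecidableEq ι]
    {M : (ι → 𝕜) → Matrix ι ι 𝕜} {F W : (ι → 𝕜) → ι → 𝕜} {T : ι → ι → ι → 𝕜}
    {M₀ A : Matrix ι ι 𝕜} {B : ι → 𝕜} {u : ι → 𝕜}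
    (hM : ∀ v r k, M v r k = ∑ m, T r k m * v m + M₀ r k)
    (hW : ∀ v r, W v r = ∑ m, A r m * v m + B r)
    (hF : ∀ᶠ v in 𝓝 u, ∀ k, ContDiffAt 𝕜 2 (fun v => F v k) v)
    (h : ∀ᶠ v in 𝓝 u, M v *ᵥ F v = W v) (q p l : ι) :
    ∑ k, M u q k * fderiv 𝕜 (fun v => fderiv 𝕜 (fun w => F w k) v (Pi.single p 1)) u
        (Pi.single l 1) +
      ∑ k, T q k p * fderiv 𝕜 (fun v => F v k) u (Pi.single l 1) +
      ∑ k, T q k l * fderiv 𝕜 (fun v => F v k) u (Pi.single p 1) = 0 := by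
  have hF_diff : ∀ᶠ v in 𝓝 u, ∀ k, DifferentiableAt 𝕜 (fun v => F v k) v :=
    hF.mono fun v hv k => (hv k).differentiableAt (by simp)
  have h_once : ∀ᶠ v in 𝓝 u, ∀ r m,
      ∑ k, M v r k * fderiv 𝕜 (fun w => F w k) v (Pi.single m 1)
        = A r m - ∑ k, T r k m * F v k := by
    filter_upwards [h.eventually_nhds, hF_diff] with v hv hv_diff r m
    rw [sum_mul_fderiv_single_of_affine_of_eventuallyEq (fun k v => hM v r k) hv_diff
      (hv.mono fun w hw => congrFun hw r) m, fderiv_single_of_eq_sum_mul_add_const (hW · r)]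
  have hdF_diff k : DifferentiableAt 𝕜 (fun v => fderiv 𝕜 (fun w => F w k) v (Pi.single p 1)) u :=
    (((hF.self_of_nhds k).fderiv_right (m := 1) le_rfl).differentiableAt one_ne_zero).clm_apply
      (differentiableAt_const _)
  have h_twice := sum_mul_fderiv_single_of_affine_of_eventuallyEq (fun k v => hM v q k) hdF_diff
    (h_once.mono fun v hv => hv q p) l
  have h_rhs := (HasFDerivAt.fun_sum (u := Finset.univ) fun k _ =>
    (hF_diff.self_of_nhds k).hasFDerivAt.const_mul (T q k p)).const_sub (A q p)
  simp only [h_rhs.fderiv, _root_.neg_apply, _root_.sum_apply, _root_.smul_apply,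
    smul_eq_mul] at h_twice
  linear_combination h_twice

end

theorem stmt_7_general (n : ℕ) (T : Fin n → Fin n → Fin n → ℂ)
    (hT1 : ∀ i j k, T j i k = - T i j k) (hT2 : ∀ i j k, T i k j = - T i j k)
    (g0 : Fin n → Fin n → ℂ)
    (A : Fin n → Fin n → ℂ) (B : Fin n → ℂ)
    (g : (Fin n → ℂ) → Matrix (Fin n) (Fin n) ℂ)
    (hg : ∀ u i j, g u i j = (∑ k, T i j k * u k) + g0 i j)
    (W : (Fin n → ℂ) → Fin n → ℂ)
    (hW : ∀ u j, W u j = (∑ l, A j l * u l) + B j)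
    (V : (Fin n → ℂ) → Fin n → ℂ)
    (hV : ∀ u, V u = ((g u)⁻¹).mulVec (W u))
    (u : Fin n → ℂ) (hu : IsUnit (g u).det) :
    ∀ q p l : Fin n,
      (∑ k, g u q k *
        fderiv ℂ (fun v => fderiv ℂ (fun w => V w k) v (Pi.single p 1)) u
          (Pi.single l 1)) +
      (∑ k, T p q k * fderiv ℂ (fun v => V v k) u (Pi.single l 1)) +
      (∑ k, T q k l * fderiv ℂ (fun v => V v k) u (Pi.single p 1)) = 0 := by
  intro q p l
  have hg_smooth i j : ContDiff ℂ 2 (fun v => g v i j) :=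
    contDiff_of_eq_sum_mul_add_const (hg · i j)
  have hU := isOpen_setOf_isUnit_det fun i j => (hg_smooth i j).continuous
  have hV_smooth : ∀ᶠ v in 𝓝 u, ∀ k, ContDiffAt ℂ 2 (fun w => V w k) v := by
    filter_upwards [hU.mem_nhds hu] with v hv k
    simp only [hV]
    exact .matrix_inv_mulVec_apply (fun i j => (hg_smooth i j).contDiffAt)
      (fun j => (contDiff_of_eq_sum_mul_add_const (hW · j)).contDiffAt) hv k
  have hgV : ∀ᶠ v in 𝓝 u, g v *ᵥ V v = W v := by
    filter_upwards [hU.mem_nhds hu] with v hv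
    rw [hV, mulVec_mulVec, mul_nonsing_inv _ hv, one_mulVec]
  have hT_cyclic k : T p q k = T q k p := by rw [hT1 q p k, hT2 q p k]
  simp only [hT_cyclic]
  exact sum_mul_fderiv_fderiv_single_add_of_affine hg hW hV_smooth hgV q p l

/-- For `V = g⁻¹ W` with `g` affine skew-symmetric and `W` affine with
skew-symmetric linear part, the second compatibility condition
`g_{qk} V^k_{,pl} + g_{pq,k} V^k_{,l} + g_{qk,l} V^k_{,p} = 0` holds
(here `g_{pq,k} = T_{pqk}`). -/
theorem stmt_7 (n : ℕ) (T : Fin n → Fin n → Fin n → ℂ)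
    (hT1 : ∀ i j k, T j i k = - T i j k) (hT2 : ∀ i j k, T i k j = - T i j k)
    (g0 : Fin n → Fin n → ℂ) (hg0 : ∀ i j, g0 j i = - g0 i j)
    (A : Fin n → Fin n → ℂ) (hA : ∀ i j, A j i = - A i j) (B : Fin n → ℂ)
    (g : (Fin n → ℂ) → Matrix (Fin n) (Fin n) ℂ)
    (hg : ∀ u i j, g u i j = (∑ k, T i j k * u k) + g0 i j)
    (W : (Fin n → ℂ) → Fin n → ℂ)
    (hW : ∀ u j, W u j = (∑ l, A j l * u l) + B j)
    (V : (Fin n → ℂ) → Fin n → ℂ)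
    (hV : ∀ u, V u = ((g u)⁻¹).mulVec (W u))
    (u : Fin n → ℂ) (hu : IsUnit (g u).det) :
    ∀ q p l : Fin n,
      (∑ k, g u q k *
        fderiv ℂ (fun v => fderiv ℂ (fun w => V w k) v (Pi.single p 1)) u
          (Pi.single l 1)) +
      (∑ k, T p q k * fderiv ℂ (fun v => V v k) u (Pi.single l 1)) +
      (∑ k, T q k l * fderiv ℂ (fun v => V v k) u (Pi.single p 1)) = 0 :=
  stmt_7_general n T hT1 hT2 g0 A B g hg W hW V hV u hu
end

section
/- Conversely, if $g_{ij}(u) = T_{ijk}u^k + g^0_{ij}$ is invertible skew-symmetric ($T$ totally antisymmetric, $g^0$ antisymmetric) and a smooth vector field $V^i(u)$ satisfies both $g_{qj}V^j_{,p} + g_{pj}V^j_{,q} = 0$ and $g_{qk}V^k_{,pl} + g_{pq,k}V^k_{,l} + g_{qk,l}V^k_{,p} = 0$ on a connected open set, then $W_j := g_{jk}V^k$ has the form $W_j = A_{jl}u^l + B_j$ with $A$ constant skew-symmetric and $B$ constant. -/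
/-!
Since `g` is affine with `∂_a g_{jk} = T_{jka}`, the partial derivatives of `W_j = g_{jk} V^k`
are `W_{j,a} = g_{jk} V^k_{,a} + T_{jka} V^k`. By cyclicity of `T`, `∂_l W_{j,a}` is the left side
of the second condition, so on the connected set each `W_{j,a}` is a constant `A_{ja}` and `W_j`
is affine. Finally `A_{ja} + A_{aj}` is the left side of the first condition, the `T`-terms
cancelling by antisymmetry.
-/

open ContinuousLinearMap (proj)

section Coordinates

variable {𝕜 : Type*} [NontriviallyNormedField 𝕜] {ι : Type*} [Fintype ι]

theorem ContinuousLinearMap.pi_ext_single [DecidableEq ι] {F : Type*} [NormedAddCommGroup F]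
    [NormedSpace 𝕜 F] {L M : (ι → 𝕜) →L[𝕜] F}
    (h : ∀ a, L (Pi.single a 1) = M (Pi.single a 1)) : L = M :=
  coe_injective <| (Pi.basisFun 𝕜 ι).ext <| by simpa using h

theorem hasFDerivAt_sum_mul_add (c : ι → 𝕜) (d : 𝕜) (u : ι → 𝕜) :
    HasFDerivAt (fun v => ∑ m, c m * v m + d) (∑ m, c m • proj m : (ι → 𝕜) →L[𝕜] 𝕜) u :=
  (HasFDerivAt.fun_sum fun m _ => (hasFDerivAt_apply m u).const_mul (c m)).add_const d

theorem hasFDerivAt_sum_mul_of_affine {T : ι → ι → ι → 𝕜} {g0 : ι → ι → 𝕜}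
    {g : (ι → 𝕜) → Matrix ι ι 𝕜} (hg : ∀ u i j, g u i j = (∑ k, T i j k * u k) + g0 i j)
    {h : ι → (ι → 𝕜) → 𝕜} {h' : ι → (ι → 𝕜) →L[𝕜] 𝕜} {u : ι → 𝕜}
    (hh : ∀ k, HasFDerivAt (h k) (h' k) u) (j : ι) :
    HasFDerivAt (fun v => ∑ k, g v j k * h k v)
      (∑ k, (g u j k • h' k + h k u • ∑ m, T j k m • proj m)) u := by
  refine HasFDerivAt.fun_sum fun k _ => HasFDerivAt.mul ?_ (hh k)
  simpa only [hg] using hasFDerivAt_sum_mul_add (T j k) (g0 j k) u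

end Coordinates

theorem ContDiffOn.differentiableAt_fderiv_apply {𝕜 E F : Type*} [NontriviallyNormedField 𝕜]
    [NormedAddCommGroup E] [NormedSpace 𝕜 E] [NormedAddCommGroup F] [NormedSpace 𝕜 F]
    {f : E → F} {s : Set E} {x : E} (hf : ContDiffOn 𝕜 2 f s) (hs : IsOpen s) (hx : x ∈ s)
    (v : E) : DifferentiableAt 𝕜 (fun y => fderiv 𝕜 f y v) x :=
  (((hf.fderiv_of_isOpen hs le_rfl).clm_apply contDiffOn_const).differentiableOn
    one_ne_zero).differentiableAt (hs.mem_nhds hx)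

section Constancy

variable {𝕜 : Type*} [RCLike 𝕜] {ι : Type*} [Fintype ι] [DecidableEq ι] {s : Set (ι → 𝕜)}

theorem IsOpen.exists_eq_sum_mul_add_of_hasFDerivAt {f : (ι → 𝕜) → 𝕜}
    {f' : (ι → 𝕜) → (ι → 𝕜) →L[𝕜] 𝕜} {c : ι → 𝕜} (hs : IsOpen s) (hs' : IsPreconnected s)
    (hf : ∀ u ∈ s, HasFDerivAt f (f' u) u) (hc : ∀ u ∈ s, ∀ a, f' u (Pi.single a 1) = c a) :
    ∃ b, ∀ u ∈ s, f u = ∑ a, c a * u a + b := by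
  obtain ⟨b, hb⟩ := hs.exists_eq_add_of_fderiv_eq hs'
    (fun u hu => (hf u hu).differentiableAt.differentiableWithinAt)
    (fun u _ => (hasFDerivAt_sum_mul_add c 0 u).differentiableAt.differentiableWithinAt)
    fun u hu => by
      rw [(hf u hu).fderiv, (hasFDerivAt_sum_mul_add c 0 u).fderiv]
      exact ContinuousLinearMap.pi_ext_single fun a => by simp [hc u hu, Pi.single_apply]
  exact ⟨b, fun u hu => by simpa using hb hu⟩

variable {T : ι → ι → ι → 𝕜} {g0 : ι → ι → 𝕜} {g : (ι → 𝕜) → Matrix ι ι 𝕜}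
  {V : (ι → 𝕜) → ι → 𝕜}

theorem IsOpen.exists_sum_mul_fderiv_add_sum_mul_eq (hs : IsOpen s) (hs' : IsPreconnected s)
    (hg : ∀ u i j, g u i j = (∑ k, T i j k * u k) + g0 i j)
    (hT : ∀ i j k, T i j k = T j k i) (hV : ContDiffOn 𝕜 2 V s)
    (hc2 : ∀ u ∈ s, ∀ q p l : ι,
      (∑ k, g u q k *
        fderiv 𝕜 (fun v => fderiv 𝕜 (fun w => V w k) v (Pi.single p 1)) u
          (Pi.single l 1)) +
      (∑ k, T p q k * fderiv 𝕜 (fun v => V v k) u (Pi.single l 1)) +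
      (∑ k, T q k l * fderiv 𝕜 (fun v => V v k) u (Pi.single p 1)) = 0)
    (j a : ι) :
    ∃ c, ∀ u ∈ s, (∑ k, g u j k * fderiv 𝕜 (fun v => V v k) u (Pi.single a 1)) +
      ∑ k, T j k a * V u k = c := by
  have hVk (k : ι) : ContDiffOn 𝕜 2 (fun v => V v k) s := contDiffOn_pi.1 hV k
  obtain ⟨c, hc⟩ := hs.exists_eq_sum_mul_add_of_hasFDerivAt (c := 0) hs' (fun u hu =>
    (hasFDerivAt_sum_mul_of_affine hg
      (fun k => ((hVk k).differentiableAt_fderiv_apply hs hu _).hasFDerivAt) j).add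
    (HasFDerivAt.fun_sum fun k _ =>
      (((hVk k).differentiableOn two_ne_zero).differentiableAt
        (hs.mem_nhds hu)).hasFDerivAt.const_mul (T j k a)))
    fun u hu l => by
      have h2 := hc2 u hu j a l
      simp only [hT a j] at h2
      simp only [Finset.sum_add_distrib, add_apply, sum_apply, smul_apply, smul_eq_mul,
        ContinuousLinearMap.proj_apply, Pi.single_apply, mul_ite, mul_one, mul_zero,
        Finset.sum_ite_eq', Finset.mem_univ, ↓reduceIte, mul_comm (fderiv 𝕜 _ u _),
        Pi.zero_apply]
      linear_combination h2
  exact ⟨c, fun u hu => by simpa using hc u hu⟩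

theorem IsOpen.exists_sum_mul_eq_sum_mul_add (hs : IsOpen s) (hs' : IsPreconnected s)
    (hg : ∀ u i j, g u i j = (∑ k, T i j k * u k) + g0 i j) (hV : ContDiffOn 𝕜 1 V s)
    {j : ι} {A : ι → 𝕜} (hA : ∀ a, ∀ u ∈ s,
      (∑ k, g u j k * fderiv 𝕜 (fun v => V v k) u (Pi.single a 1)) + ∑ k, T j k a * V u k = A a) :
    ∃ b, ∀ u ∈ s, ∑ k, g u j k * V u k = ∑ a, A a * u a + b :=
  hs.exists_eq_sum_mul_add_of_hasFDerivAt hs' (fun u hu =>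
    hasFDerivAt_sum_mul_of_affine hg (fun k => ((((contDiffOn_pi.1 hV k).differentiableOn
      one_ne_zero).differentiableAt (hs.mem_nhds hu)).hasFDerivAt)) j)
    fun u hu a => by
      rw [← hA a u hu]
      simp [Finset.sum_add_distrib, Pi.single_apply, mul_comm (V u _)]

end Constancy

theorem stmt_8_general (n : ℕ) (T : Fin n → Fin n → Fin n → ℂ)
    (hT1 : ∀ i j k, T j i k = - T i j k) (hT2 : ∀ i j k, T i k j = - T i j k)
    (g0 : Fin n → Fin n → ℂ)
    (g : (Fin n → ℂ) → Matrix (Fin n) (Fin n) ℂ)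
    (hg : ∀ u i j, g u i j = (∑ k, T i j k * u k) + g0 i j)
    (s : Set (Fin n → ℂ)) (hs : IsOpen s) (hconn : IsConnected s)
    (V : (Fin n → ℂ) → Fin n → ℂ) (hV : ContDiffOn ℂ ⊤ V s)
    (hc1 : ∀ u ∈ s, ∀ q p : Fin n,
      (∑ j, g u q j * fderiv ℂ (fun v => V v j) u (Pi.single p 1)) +
      (∑ j, g u p j * fderiv ℂ (fun v => V v j) u (Pi.single q 1)) = 0)
    (hc2 : ∀ u ∈ s, ∀ q p l : Fin n,
      (∑ k, g u q k *
        fderiv ℂ (fun v => fderiv ℂ (fun w => V w k) v (Pi.single p 1)) u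
          (Pi.single l 1)) +
      (∑ k, T p q k * fderiv ℂ (fun v => V v k) u (Pi.single l 1)) +
      (∑ k, T q k l * fderiv ℂ (fun v => V v k) u (Pi.single p 1)) = 0) :
    ∃ (A : Fin n → Fin n → ℂ) (B : Fin n → ℂ),
      (∀ i j, A j i = - A i j) ∧
      ∀ u ∈ s, ∀ j, (∑ k, g u j k * V u k) = (∑ l, A j l * u l) + B j := by
  have hcyc (i j k : Fin n) : T i j k = T j k i := by rw [hT2 j i k, hT1 i j k, neg_neg]
  have hV2 : ContDiffOn ℂ 2 V s := hV.of_le le_top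
  choose A hA using hs.exists_sum_mul_fderiv_add_sum_mul_eq hconn.isPreconnected hg hcyc hV2 hc2
  choose B hB using fun j => hs.exists_sum_mul_eq_sum_mul_add hconn.isPreconnected hg
    (hV2.of_le one_le_two) (hA j)
  refine ⟨A, B, fun i j => ?_, fun u hu j => hB j u hu⟩
  obtain ⟨u0, hu0⟩ := hconn.nonempty
  have hTV : ∑ k, T j k i * V u0 k = -∑ k, T i k j * V u0 k := by
    rw [← Finset.sum_neg_distrib]
    exact Finset.sum_congr rfl fun k _ => by rw [hT2 i j k, hcyc i j k, neg_mul, neg_neg]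
  rw [← hA i j u0 hu0, ← hA j i u0 hu0]
  linear_combination hc1 u0 hu0 j i + hTV

/-- Conversely, if a smooth vector field `V` satisfies both compatibility
conditions with respect to an affine invertible skew-symmetric `g` on a connected
open set, then `W_j = g_{jk} V^k` is affine with constant skew-symmetric linear part. -/
theorem stmt_8 (n : ℕ) (T : Fin n → Fin n → Fin n → ℂ)
    (hT1 : ∀ i j k, T j i k = - T i j k) (hT2 : ∀ i j k, T i k j = - T i j k)
    (g0 : Fin n → Fin n → ℂ) (hg0 : ∀ i j, g0 j i = - g0 i j)
    (g : (Fin n → ℂ) → Matrix (Fin n) (Fin n) ℂ)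
    (hg : ∀ u i j, g u i j = (∑ k, T i j k * u k) + g0 i j)
    (s : Set (Fin n → ℂ)) (hs : IsOpen s) (hconn : IsConnected s)
    (hinv : ∀ u ∈ s, IsUnit (g u).det)
    (V : (Fin n → ℂ) → Fin n → ℂ) (hV : ContDiffOn ℂ ⊤ V s)
    (hc1 : ∀ u ∈ s, ∀ q p : Fin n,
      (∑ j, g u q j * fderiv ℂ (fun v => V v j) u (Pi.single p 1)) +
      (∑ j, g u p j * fderiv ℂ (fun v => V v j) u (Pi.single q 1)) = 0)
    (hc2 : ∀ u ∈ s, ∀ q p l : Fin n,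
      (∑ k, g u q k *
        fderiv ℂ (fun v => fderiv ℂ (fun w => V w k) v (Pi.single p 1)) u
          (Pi.single l 1)) +
      (∑ k, T p q k * fderiv ℂ (fun v => V v k) u (Pi.single l 1)) +
      (∑ k, T q k l * fderiv ℂ (fun v => V v k) u (Pi.single p 1)) = 0) :
    ∃ (A : Fin n → Fin n → ℂ) (B : Fin n → ℂ),
      (∀ i j, A j i = - A i j) ∧
      ∀ u ∈ s, ∀ j, (∑ k, g u j k * V u k) = (∑ l, A j l * u l) + B j :=
  stmt_8_general n T hT1 hT2 g0 g hg s hs hconn V hV hc1 hc2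
end

section
/- Let $g$ be an invertible skew-symmetric $n \times n$ complex matrix and $M$ any $n \times n$ matrix such that $gM$ is skew-symmetric. Then every eigenvalue of $M$ has even algebraic multiplicity; equivalently, the characteristic polynomial of $M$ is a perfect square in $\mathbb{C}[\lambda]$. -/
open Matrix Polynomial

/-!
For `g` skew-symmetric and `g * M` skew-symmetric, the pencil `g * charmatrix M = X • g - g * M`
is a skew-symmetric matrix over `ℂ[X]` with determinant `det g * charpoly M`. A skew-symmetric
determinant over a field of characteristic `≠ 2` is a square: clear a nonzero `2 × 2` pivot block,
whose Schur complement is again skew-symmetric, and induct. Over `ℂ[X]` this square root lives a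
priori in `ℂ(X)`, but `ℂ[X]` is integrally closed, so it is a polynomial. Finally `det g` is a
nonzero square in `ℂ`.
-/

theorem IsIntegrallyClosed.isSquare_of_isSquare_algebraMap {R K : Type*} [CommRing R]
    [IsIntegrallyClosed R] [CommRing K] [Algebra R K] [IsFractionRing R K] {x : R}
    (hx : IsSquare (algebraMap R K x)) : IsSquare x := by
  obtain ⟨q, hq⟩ := hx
  obtain ⟨r, hr⟩ := IsIntegrallyClosed.exists_algebraMap_eq_of_isIntegral_pow (R := R) (x := q)
    two_pos (by rw [sq, ← hq]; exact isIntegral_algebraMap)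
  exact ⟨r, IsFractionRing.injective R K (by rw [map_mul, hr, hq])⟩

namespace Matrix

section CommRing

variable {R : Type*} [CommRing R] {ι m n : Type*}

theorem diag_eq_zero_of_transpose_eq_neg [NoZeroDivisors R] [NeZero (2 : R)] {A : Matrix ι ι R}
    (hA : Aᵀ = -A) (i : ι) : A i i = 0 := by
  have h : A i i = -A i i := congrFun₂ hA i i
  rw [eq_neg_iff_add_eq_zero, ← two_mul] at h
  exact (mul_eq_zero.mp h).resolve_left two_ne_zero

theorem det_fin_two_of_transpose_eq_neg [NoZeroDivisors R] [NeZero (2 : R)]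
    {A : Matrix (Fin 2) (Fin 2) R} (hA : Aᵀ = -A) : A.det = A 0 1 ^ 2 := by
  have h10 : A 1 0 = -A 0 1 := congrFun₂ hA 0 1
  rw [det_fin_two, diag_eq_zero_of_transpose_eq_neg hA 0, diag_eq_zero_of_transpose_eq_neg hA 1,
    h10]
  ring

theorem fromBlocks_transpose_eq_neg_iff {A : Matrix m m R} {B : Matrix m n R} {C : Matrix n m R}
    {D : Matrix n n R} :
    (fromBlocks A B C D)ᵀ = -fromBlocks A B C D ↔ Aᵀ = -A ∧ Cᵀ = -B ∧ Bᵀ = -C ∧ Dᵀ = -D := by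
  rw [fromBlocks_transpose, fromBlocks_neg, fromBlocks_inj]

variable [Fintype m] [DecidableEq m]

theorem transpose_nonsing_inv_eq_neg {A : Matrix m m R} (hA : Aᵀ = -A) (hdet : IsUnit A.det) :
    A⁻¹ᵀ = -A⁻¹ := by
  rw [transpose_nonsing_inv, hA]
  exact inv_eq_right_inv (by rw [neg_mul_neg, mul_nonsing_inv A hdet])

theorem transpose_schur_complement_eq_neg {A : Matrix m m R} {B : Matrix m n R} {C : Matrix n m R}
    {D : Matrix n n R} (hA : Aᵀ = -A) (hB : Bᵀ = -C) (hC : Cᵀ = -B) (hD : Dᵀ = -D)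
    (hdet : IsUnit A.det) : (D - C * A⁻¹ * B)ᵀ = -(D - C * A⁻¹ * B) := by
  rw [transpose_sub, transpose_mul, transpose_mul, hD, hB, hC,
    transpose_nonsing_inv_eq_neg hA hdet]
  simp only [Matrix.neg_mul, Matrix.mul_neg, neg_neg, Matrix.mul_assoc]
  abel

end CommRing

section Field

variable {F : Type*} [Field F] [NeZero (2 : F)]

theorem isSquare_det_fin_of_transpose_eq_neg :
    ∀ (n : ℕ) (A : Matrix (Fin n) (Fin n) F), Aᵀ = -A → IsSquare A.det
  | 0, A, _ => by simp
  | 1, A, hA => by simp [diag_eq_zero_of_transpose_eq_neg hA 0]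
  | m + 2, A, hA => by
    by_cases hdet : A.det = 0
    · simp [hdet]
    obtain ⟨j, hj⟩ : ∃ j, A 0 j ≠ 0 := by
      by_contra! h
      exact hdet (det_eq_zero_of_row_eq_zero 0 h)
    have hj0 : (0 : Fin (m + 2)) ≠ j := by
      rintro rfl; exact hj (diag_eq_zero_of_transpose_eq_neg hA 0)
    -- move the pivot `A 0 j` into the leading `2 × 2` block
    let e : Fin (m + 2) ≃ Fin 2 ⊕ Fin m :=
      (Equiv.swap 1 j).trans ((finCongr (by omega)).trans finSumFinEquiv.symm)
    set B := reindex e e A with hB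
    have hBskew : Bᵀ = -B := by rw [hB, transpose_reindex, hA]; rfl
    rw [← fromBlocks_toBlocks B, fromBlocks_transpose_eq_neg_iff] at hBskew
    obtain ⟨h₁₁, h₂₁, h₁₂, h₂₂⟩ := hBskew
    have hpivot : B.toBlocks₁₁ 0 1 = A 0 j := by
      change A (Equiv.swap 1 j 0) (Equiv.swap 1 j 1) = A 0 j
      rw [Equiv.swap_apply_left, Equiv.swap_apply_of_ne_of_ne (by simp) hj0]
    have hdet₁₁ : B.toBlocks₁₁.det = A 0 j ^ 2 := by
      rw [det_fin_two_of_transpose_eq_neg h₁₁, hpivot]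
    have hunit : IsUnit B.toBlocks₁₁.det := by
      rw [hdet₁₁]; exact (pow_ne_zero 2 hj).isUnit
    have := B.toBlocks₁₁.invertibleOfIsUnitDet hunit
    rw [← det_reindex_self e A, ← hB, ← fromBlocks_toBlocks B, det_fromBlocks₁₁,
      invOf_eq_nonsing_inv, hdet₁₁]
    exact (IsSquare.sq _).mul (isSquare_det_fin_of_transpose_eq_neg m _
      (transpose_schur_complement_eq_neg h₁₁ h₁₂ h₂₁ h₂₂ hunit))

end Field

theorem isSquare_det_of_transpose_eq_neg {R ι : Type*} [CommRing R] [IsDomain R]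
    [IsIntegrallyClosed R] [NeZero (2 : R)] [Fintype ι] [DecidableEq ι] {A : Matrix ι ι R}
    (hA : Aᵀ = -A) : IsSquare A.det := by
  let K := FractionRing R
  have : NeZero (2 : K) := ⟨by
    simpa only [map_ofNat, map_zero] using
      (IsFractionRing.injective R K).ne (two_ne_zero : (2 : R) ≠ 0)⟩
  let e := Fintype.equivFin ι
  let B := reindex e e ((algebraMap R K).mapMatrix A)
  have hB : Bᵀ = -B := by
    rw [transpose_reindex, RingHom.mapMatrix_apply, ← transpose_map, hA,
      Matrix.map_neg _ (map_neg _)]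
    rfl
  refine IsIntegrallyClosed.isSquare_of_isSquare_algebraMap (K := K) ?_
  rw [RingHom.map_det, ← det_reindex_self e]
  exact isSquare_det_fin_of_transpose_eq_neg _ B hB

theorem transpose_map_C_mul_charmatrix_eq_neg {R : Type*} [CommRing R] {n : Type*} [Fintype n]
    [DecidableEq n] {g M : Matrix n n R} (hg : gᵀ = -g) (hgM : (g * M)ᵀ = -(g * M)) :
    (g.map C * M.charmatrix)ᵀ = -(g.map C * M.charmatrix) := by
  have hpencil : g.map C * M.charmatrix = (X : R[X]) • g.map C - (g * M).map C := by
    rw [charmatrix, mul_sub, RingHom.mapMatrix_apply, Matrix.map_mul, scalar_apply,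
      ← smul_one_eq_diagonal, mul_smul_comm, mul_one]
  rw [hpencil, transpose_sub, transpose_smul, ← transpose_map, ← transpose_map, hg, hgM,
    Matrix.map_neg _ (map_neg C), Matrix.map_neg _ (map_neg C), smul_neg, neg_sub,
    sub_neg_eq_add]
  abel

end Matrix

/-- If `g` is invertible skew-symmetric and `gM` is skew-symmetric, then the
characteristic polynomial of `M` is a perfect square; equivalently every
eigenvalue of `M` has even algebraic multiplicity. -/
theorem stmt_10 (n : ℕ) (g M : Matrix (Fin n) (Fin n) ℂ)
    (hg : gᵀ = -g) (hdet : IsUnit g.det) (hgM : (g * M)ᵀ = -(g * M)) :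
    ∃ p : Polynomial ℂ, M.charpoly = p ^ 2 := by
  have hsq : IsSquare (C g.det * M.charpoly) := by
    rw [charpoly, RingHom.map_det, RingHom.mapMatrix_apply, ← det_mul]
    exact isSquare_det_of_transpose_eq_neg (transpose_map_C_mul_charmatrix_eq_neg hg hgM)
  have hsqrt : IsSquare g.det⁻¹ := by
    obtain ⟨c, hc⟩ := IsAlgClosed.exists_pow_nat_eq g.det⁻¹ two_pos
    exact ⟨c, by rw [← hc, sq]⟩
  have hcharpoly : M.charpoly = C g.det⁻¹ * (C g.det * M.charpoly) := by
    rw [← mul_assoc, ← C_mul, inv_mul_cancel₀ hdet.ne_zero, C_1, one_mul]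
  rw [← isSquare_iff_exists_sq, hcharpoly]
  exact (hsqrt.map C).mul hsq
end

section
/- Let $V^i_j$ be a matrix field satisfying $g_{qj}V^j_p + g_{pj}V^j_q = 0$ and whose derivatives satisfy $V^a_{,pl} = -g^{aq}(T_{pqk}V^k_l + T_{qkl}V^k_p)$, with $g$ invertible skew-symmetric affine as above. Then the Nijenhuis tensor $N^i_{jk} = V^p_j V^i_{k,p} - V^p_k V^i_{j,p} - V^i_p(V^p_{k,j} - V^p_{j,k})$ equals $g^{ia}(T_{jal}V^l_pV^p_k - T_{kal}V^l_pV^p_j - 2T_{alp}V^l_kV^p_j)$. -/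
/-!
Since `T` is totally antisymmetric it is cyclic, `T_{cab} = T_{abc}`, and then the prescribed
derivative `V^a_{p,l}` is symmetric in `p, l`; so the last term of the Nijenhuis tensor vanishes.
Substituting the derivative into the two remaining terms and swapping the summation indices
`l, p` in the term `T_{alp}V^l_jV^p_k = -T_{alp}V^l_kV^p_j` gives the formula.
-/

open Finset

section
variable {ι R : Type*} [CommRing R]

theorem cyclic_of_antisymm {T : ι → ι → ι → R}
    (hT₁ : ∀ i j k, T j i k = -T i j k) (hT₂ : ∀ i j k, T i k j = -T i j k) (a b c : ι) :
    T c a b = T a b c := by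
  linear_combination hT₁ a c b - hT₂ a b c

variable [Fintype ι]

/-- `D a p l` stands for `V^a_{p,l}`. -/
def nijenhuis (V : ι → ι → R) (D : ι → ι → ι → R) (i j k : ι) : R :=
  ∑ p, V p j * D i k p - ∑ p, V p k * D i j p - ∑ p, V i p * (D p k j - D p j k)

theorem sum_sum_antisymm_swap {T : ι → ι → ι → R} (hT₂ : ∀ i j k, T i k j = -T i j k)
    (V : ι → ι → R) (a j k : ι) :
    ∑ l, ∑ p, T a l p * V l j * V p k = -∑ l, ∑ p, T a l p * V l k * V p j := by
  rw [sum_comm, ← sum_neg_distrib]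
  refine sum_congr rfl fun l _ => ?_
  rw [← sum_neg_distrib]
  refine sum_congr rfl fun p _ => ?_
  linear_combination V l k * V p j * hT₂ a p l

variable {G V : ι → ι → R} {T D : ι → ι → ι → R}

theorem deriv_symm_of_antisymm (hT₁ : ∀ i j k, T j i k = -T i j k)
    (hT₂ : ∀ i j k, T i k j = -T i j k)
    (hD : ∀ a p l, D a p l = -∑ q, ∑ k, G a q * (T p q k * V k l + T q k l * V k p))
    (a p l : ι) : D a p l = D a l p := by
  rw [hD, hD, neg_inj]
  refine sum_congr rfl fun q _ => sum_congr rfl fun k _ => ?_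
  rw [cyclic_of_antisymm hT₁ hT₂ q k p, cyclic_of_antisymm hT₁ hT₂ q k l]
  ring

theorem sum_mul_deriv_eq
    (hD : ∀ a p l, D a p l = -∑ q, ∑ k, G a q * (T p q k * V k l + T q k l * V k p))
    (i j k : ι) :
    ∑ p, V p j * D i k p = -∑ a, G i a *
      (∑ l, ∑ p, T k a l * V l p * V p j + ∑ l, ∑ p, T a l p * V l k * V p j) := by
  calc ∑ p, V p j * D i k p
      = ∑ p, ∑ a, ∑ l, -(G i a * (T k a l * V l p * V p j + T a l p * V l k * V p j)) := by
        refine sum_congr rfl fun p _ => ?_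
        simp only [hD, mul_neg, mul_sum, ← sum_neg_distrib]
        exact sum_congr rfl fun a _ => sum_congr rfl fun l _ => by ring
    _ = ∑ a, ∑ l, ∑ p, -(G i a * (T k a l * V l p * V p j + T a l p * V l k * V p j)) := by
        rw [sum_comm]
        exact sum_congr rfl fun a _ => sum_comm
    _ = _ := by
        simp only [sum_neg_distrib, mul_add, sum_add_distrib, mul_sum, mul_assoc]

theorem nijenhuis_eq (hT₁ : ∀ i j k, T j i k = -T i j k) (hT₂ : ∀ i j k, T i k j = -T i j k)
    (hD : ∀ a p l, D a p l = -∑ q, ∑ k, G a q * (T p q k * V k l + T q k l * V k p))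
    (i j k : ι) :
    nijenhuis V D i j k = ∑ a, G i a *
      ((∑ l, ∑ p, T j a l * V l p * V p k) - (∑ l, ∑ p, T k a l * V l p * V p j) -
        2 * (∑ l, ∑ p, T a l p * V l k * V p j)) := by
  have hsymm : ∀ p, D p k j - D p j k = 0 := fun p => by
    rw [deriv_symm_of_antisymm hT₁ hT₂ hD p k j, sub_self]
  simp only [nijenhuis, hsymm, mul_zero, sum_const_zero, sub_zero]
  rw [sum_mul_deriv_eq hD, sum_mul_deriv_eq hD, neg_sub_neg, ← sum_sub_distrib]
  refine sum_congr rfl fun a _ => ?_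
  linear_combination G i a * sum_sum_antisymm_swap hT₂ V a j k

end

theorem stmt_12_general (n : ℕ) (T : Fin n → Fin n → Fin n → ℂ)
    (hT1 : ∀ i j k, T j i k = - T i j k) (hT2 : ∀ i j k, T i k j = - T i j k)
    (g : (Fin n → ℂ) → Matrix (Fin n) (Fin n) ℂ)
    (Vm : (Fin n → ℂ) → Fin n → Fin n → ℂ)
    (u : Fin n → ℂ)
    (hD : ∀ a p l : Fin n,
      fderiv ℂ (fun v => Vm v a p) u (Pi.single l 1) =
        - ∑ q, ∑ k, (g u)⁻¹ a q * (T p q k * Vm u k l + T q k l * Vm u k p)) :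
    ∀ i j k : Fin n,
      ((∑ p, Vm u p j * fderiv ℂ (fun v => Vm v i k) u (Pi.single p 1)) -
       (∑ p, Vm u p k * fderiv ℂ (fun v => Vm v i j) u (Pi.single p 1)) -
       (∑ p, Vm u i p *
         (fderiv ℂ (fun v => Vm v p k) u (Pi.single j 1) -
          fderiv ℂ (fun v => Vm v p j) u (Pi.single k 1)))) =
      ∑ a, (g u)⁻¹ i a *
        ((∑ l, ∑ p, T j a l * Vm u l p * Vm u p k) -
         (∑ l, ∑ p, T k a l * Vm u l p * Vm u p j) -
         2 * (∑ l, ∑ p, T a l p * Vm u l k * Vm u p j)) :=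
  nijenhuis_eq hT1 hT2 hD

/-- If the matrix field `V^i_j` satisfies `g_{qj}V^j_p + g_{pj}V^j_q = 0` and
`V^a_{p,l} = -g^{aq}(T_{pqk}V^k_l + T_{qkl}V^k_p)`, then the Nijenhuis tensor of
`V` equals `g^{ia}(T_{jal}V^l_pV^p_k - T_{kal}V^l_pV^p_j - 2 T_{alp}V^l_kV^p_j)`. -/
theorem stmt_12 (n : ℕ) (T : Fin n → Fin n → Fin n → ℂ)
    (hT1 : ∀ i j k, T j i k = - T i j k) (hT2 : ∀ i j k, T i k j = - T i j k)
    (g0 : Fin n → Fin n → ℂ) (hg0 : ∀ i j, g0 j i = - g0 i j)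
    (g : (Fin n → ℂ) → Matrix (Fin n) (Fin n) ℂ)
    (hg : ∀ u i j, g u i j = (∑ k, T i j k * u k) + g0 i j)
    (Vm : (Fin n → ℂ) → Fin n → Fin n → ℂ)
    (u : Fin n → ℂ) (hu : IsUnit (g u).det)
    (hskew : ∀ q p : Fin n,
      (∑ j, g u q j * Vm u j p) + (∑ j, g u p j * Vm u j q) = 0)
    (hD : ∀ a p l : Fin n,
      fderiv ℂ (fun v => Vm v a p) u (Pi.single l 1) =
        - ∑ q, ∑ k, (g u)⁻¹ a q * (T p q k * Vm u k l + T q k l * Vm u k p)) :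
    ∀ i j k : Fin n,
      ((∑ p, Vm u p j * fderiv ℂ (fun v => Vm v i k) u (Pi.single p 1)) -
       (∑ p, Vm u p k * fderiv ℂ (fun v => Vm v i j) u (Pi.single p 1)) -
       (∑ p, Vm u i p *
         (fderiv ℂ (fun v => Vm v p k) u (Pi.single j 1) -
          fderiv ℂ (fun v => Vm v p j) u (Pi.single k 1)))) =
      ∑ a, (g u)⁻¹ i a *
        ((∑ l, ∑ p, T j a l * Vm u l p * Vm u p k) -
         (∑ l, ∑ p, T k a l * Vm u l p * Vm u p j) -
         2 * (∑ l, ∑ p, T a l p * Vm u l k * Vm u p j)) :=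
  stmt_12_general n T hT1 hT2 g Vm u hD
end
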